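/- There exists a level-5 network on a two-element leaf set {x,y} that is not tree-based. Consequently, for every k ≥ 5 there exists a proper level-k network that is not tree-based. -/

import Mathlib

open SimpleGraph

/-- Degree of a vertex (as the cardinality of its neighbour set). -/
noncomputable def deg {W : Type*} (G : SimpleGraph W) (v : W) : ℕ :=
  (G.neighborSet v).ncard

/-- `T` is a support-tree for `G` with leaf set `X`: a spanning tree of `G`
whose leaves (vertices of degree at most 1) are exactly `X`. -/
def IsSupportTree {W : Type*} (G T : SimpleGraph W) (X : Set W) : Prop :=
  T ≤ G ∧ T.IsTree ∧ {v | deg T v ≤ 1} = X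

/-- A graph is tree-based on `X` if it has a support-tree with leaf set `X`. -/
def TreeBased {W : Type*} (G : SimpleGraph W) (X : Set W) : Prop :=
  ∃ T, IsSupportTree G T X

/-- An unrooted phylogenetic network on `X`: a connected graph all of whose
vertices have degree 1 or 3 (allowing the single-vertex convention via `≤ 1`),
whose leaves are exactly `X`. -/
def IsNetwork {W : Type*} (G : SimpleGraph W) (X : Set W) : Prop :=
  G.Connected ∧ (∀ v, deg G v ≤ 1 ∨ deg G v = 3) ∧ {v | deg G v ≤ 1} = X

/-- The cut-edge `{u,v}` induces a split of `X`: each side of the deleted edge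
contains an element of `X`. -/
def InducesSplit {W : Type*} (G : SimpleGraph W) (X : Set W) (u v : W) : Prop :=
  (∃ a ∈ X, (G.deleteEdges {s(u, v)}).Reachable u a) ∧
    ∃ b ∈ X, (G.deleteEdges {s(u, v)}).Reachable v b

/-- A network is proper if every cut-edge induces a split of `X`. -/
def ProperNet {W : Type*} (G : SimpleGraph W) (X : Set W) : Prop :=
  ∀ u v : W, (s(u, v) ∈ G.edgeSet ∧ G.IsBridge s(u, v)) → InducesSplit G X u v

/-- A network is simple if every cut-edge is trivial, i.e. has a leaf endpoint. -/
def SimpleNet {W : Type*} (G : SimpleGraph W) (X : Set W) : Prop :=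
  ∀ u v : W, (s(u, v) ∈ G.edgeSet ∧ G.IsBridge s(u, v)) → u ∈ X ∨ v ∈ X

/-- A graph is bridgeless if it has no cut-edge. -/
def Bridgeless {W : Type*} (H : SimpleGraph W) : Prop :=
  ∀ e, ¬ (e ∈ H.edgeSet ∧ H.IsBridge e)

/-- A blob of `G`: a maximal connected subgraph without a cut-edge that is not
a single vertex. -/
def IsBlob {W : Type*} (G : SimpleGraph W) (B : G.Subgraph) : Prop :=
  B.verts.Nontrivial ∧ B.Connected ∧ Bridgeless B.coe ∧
    ∀ B' : G.Subgraph, B'.verts.Nontrivial → B'.Connected → Bridgeless B'.coe →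
      B ≤ B' → B = B'

/-- The simple network `B_N` associated to a blob `B`: the union of `B` with
all cut-edges of `G` incident to `B`. -/
def blobNet {W : Type*} (G : SimpleGraph W) (B : G.Subgraph) : G.Subgraph where
  verts := B.verts ∪ {w | ∃ u ∈ B.verts, (s(u, w) ∈ G.edgeSet ∧ G.IsBridge s(u, w))}
  Adj a b := B.Adj a b ∨ ((s(a, b) ∈ G.edgeSet ∧ G.IsBridge s(a, b)) ∧ (a ∈ B.verts ∨ b ∈ B.verts))
  adj_sub := by
    rintro v w (h | ⟨h, -⟩)
    · exact B.adj_sub h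
    · exact (SimpleGraph.mem_edgeSet G).mp h.1
  edge_vert := by
    rintro v w (h | ⟨h, hv | hw⟩)
    · exact Or.inl (B.edge_vert h)
    · exact Or.inl hv
    · exact Or.inr ⟨w, hw, by rwa [Sym2.eq_swap]⟩
  symm := by
    constructor
    rintro v w (h | ⟨h, hc⟩)
    · exact Or.inl (B.adj_symm h)
    · exact Or.inr ⟨by rwa [Sym2.eq_swap], hc.symm⟩

/-- The leaf set of `B_N`: endpoints of incident cut-edges not lying in `B`. -/
def blobNetLeaves {W : Type*} (G : SimpleGraph W) (B : G.Subgraph) :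
    Set (blobNet G B).verts :=
  {w | (w : W) ∉ B.verts}

/-- `G` is a level-`k` network: at most `k` edges must be removed from each
blob to obtain a tree. -/
def Level {W : Type*} (G : SimpleGraph W) (k : ℕ) : Prop :=
  ∀ B : G.Subgraph, IsBlob G B → B.edgeSet.ncard ≤ B.verts.ncard - 1 + k
/-- The network `N − x`: delete leaf `x` and its incident edge and suppress the
resulting degree-2 vertex `v` (the former neighbour of `x`). -/
def suppressAdj {V : Type*} (G : SimpleGraph V) (x v : V) :
    SimpleGraph {w : V // w ≠ x ∧ w ≠ v} where
  Adj a b := a ≠ b ∧ (G.Adj a b ∨ (G.Adj v a ∧ G.Adj v b))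
  symm := by
    constructor
    rintro a b ⟨h1, h2 | ⟨h3, h4⟩⟩
    · exact ⟨h1.symm, Or.inl h2.symm⟩
    · exact ⟨h1.symm, Or.inr ⟨h4, h3⟩⟩
  loopless := by constructor; rintro a ⟨h1, -⟩; exact h1 rfl

/-- The network `C_e(x,y)`: replace the edge `e = {u,v}` of `C` by a path
`u – w₁ – w₂ – v` and attach pendant leaves `x = Sum.inr 2` to `w₁ = Sum.inr 0`
and `y = Sum.inr 3` to `w₂ = Sum.inr 1`. -/
def extGraph {W : Type*} (C : SimpleGraph W) (u v : W) : SimpleGraph (W ⊕ Fin 4) :=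
  SimpleGraph.fromEdgeSet
    ((Sym2.map Sum.inl) '' (C.edgeSet \ {s(u, v)}) ∪
      {s(Sum.inl u, Sum.inr 0), s(Sum.inr 0, Sum.inr 1), s(Sum.inr 1, Sum.inl v),
       s(Sum.inr 0, Sum.inr 2), s(Sum.inr 1, Sum.inr 3)})

/-- The leaves `x` and `y` of `C_e(x,y)`. -/
def extLeaves (W : Type*) : Set (W ⊕ Fin 4) := {Sum.inr 2, Sum.inr 3}

/-- The Petersen graph, realized as the Kneser graph K(5,2). -/
def petersen : SimpleGraph {s : Finset (Fin 5) // s.card = 2} where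
  Adj a b := Disjoint (a : Finset (Fin 5)) (b : Finset (Fin 5))
  symm := ⟨fun a b h => h.symm⟩
  loopless := ⟨fun a h => by
    have h2 : (a : Finset (Fin 5)) = ∅ := by
      simpa using disjoint_self.mp h
    have := a.2
    rw [h2] at this
    simp at this⟩

/-- `D` is an orientation of the edges of `G`. -/
def IsOrientation {V : Type*} (G : SimpleGraph V) (D : V → V → Prop) : Prop :=
  (∀ u v, G.Adj u v ↔ (D u v ∨ D v u)) ∧ ∀ u v, ¬ (D u v ∧ D v u)

noncomputable def outdeg {α : Type*} (r : α → α → Prop) (v : α) : ℕ := {w | r v w}.ncard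
noncomputable def indeg {α : Type*} (r : α → α → Prop) (v : α) : ℕ := {w | r w v}.ncard

/-- A rooted (binary) phylogenetic network with root `ρ` and leaf set `Y`:
a DAG with a unique root of indegree 0 and outdegree 2, leaves (outdegree 0,
indegree 1) exactly `Y`, and all non-root vertices of total degree 1 or 3. -/
def IsRootedNetwork {α : Type*} (r : α → α → Prop) (ρ : α) (Y : Set α) : Prop :=
  (∀ v, ¬ Relation.TransGen r v v) ∧
  indeg r ρ = 0 ∧ outdeg r ρ = 2 ∧
  (∀ v, indeg r v = 0 → v = ρ) ∧
  (∀ v, v ≠ ρ → indeg r v + outdeg r v = 1 ∨ indeg r v + outdeg r v = 3) ∧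
  {v | outdeg r v = 0} = Y ∧ (∀ v ∈ Y, indeg r v = 1)

/-- A rooted network is tree-based if it contains a spanning arborescence
rooted at `ρ` whose leaf set is `Y`. -/
def RootedTreeBased {α : Type*} (r : α → α → Prop) (ρ : α) (Y : Set α) : Prop :=
  ∃ t : α → α → Prop, (∀ a b, t a b → r a b) ∧
    (∀ v, Relation.ReflTransGen t ρ v) ∧
    (∀ v, v ≠ ρ → indeg t v = 1) ∧ indeg t ρ = 0 ∧
    {v | outdeg t v = 0} = Y

/-- `T` is obtained from `T'` by suppressing all degree-2 vertices, via the
embedding `f` of the vertices of `T` into those of `T'`. -/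
def Suppresses {A B : Type*} (T' : SimpleGraph A) (T : SimpleGraph B) (f : B → A) : Prop :=
  Function.Injective f ∧
  (∀ a : A, deg T' a ≠ 2 → a ∈ Set.range f) ∧
  (∀ b : B, deg T' (f b) ≠ 2) ∧
  ∀ b b' : B, T.Adj b b' ↔
    ∃ p : T'.Walk (f b) (f b'), p.IsPath ∧
      ∀ a ∈ p.support, a ≠ f b → a ≠ f b' → deg T' a = 2

/-- `G` is fully tree-based on `X`: every subtree of `G` whose leaf set is `X`
is spanning (hence a support-tree). -/
def FullyTreeBased {W : Type*} (G : SimpleGraph W) (X : Set W) : Prop :=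
  ∀ H : G.Subgraph, H.Connected → H.coe.IsAcyclic →
    {v | v ∈ H.verts ∧ (H.neighborSet v).ncard ≤ 1} = X → H.IsSpanning

/-!
A support-tree `T` of a network on two leaves `{x, y}` has `|V| - 1` edges, so the handshake
lemma forces every vertex other than `x` and `y` to have degree exactly 2 in `T`: `T` is a
Hamiltonian `x`–`y` path. An exhaustive search shows that the graph of Figure 3 of
Francis–Huber–Moulton has no such path. It is level-5 because the cyclomatic number
`|E| - |V| + 1` of a connected subgraph never exceeds that of the whole graph, here
`16 - 12 + 1 = 5`; and deleting any of its edges leaves both endpoints connected to a leaf, so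
it is proper. A level-5 network is level-`k` for every `k ≥ 5`, so this one graph serves for all
`k`.
-/

theorem deg_eq_degree {V : Type*} (G : SimpleGraph V) (v : V) [Fintype (G.neighborSet v)] :
    deg G v = G.degree v := by
  rw [deg, Set.ncard_eq_toFinset_card']
  rfl

namespace SimpleGraph

variable {V : Type*}

theorem Connected.of_adj_reachable {G H : SimpleGraph V} (hG : G.Connected)
    (h : ∀ ⦃u v⦄, G.Adj u v → H.Reachable u v) : H.Connected where
  preconnected u v := by
    obtain ⟨p⟩ := hG.preconnected u v
    induction p with
    | nil => rfl
    | cons hadj _ ih => exact (h hadj).trans ih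
  nonempty := hG.nonempty

/- Deleting the edges of `B` outside a spanning tree of `B` keeps `G` connected, and a connected
graph has at least `|V| - 1` edges. -/
theorem Subgraph.Connected.ncard_edgeSet_add_card_le [Finite V] {G : SimpleGraph V}
    (hG : G.Connected) {B : G.Subgraph} (hB : B.Connected) :
    B.edgeSet.ncard + Nat.card V ≤ B.verts.ncard + G.edgeSet.ncard := by
  obtain ⟨S, hSB, hS⟩ := hB.coe.exists_isTree_le
  set E : Set (Sym2 V) := Sym2.map Subtype.val '' S.edgeSet
  let φ : S →g G.deleteEdges (B.edgeSet \ E) := ⟨Subtype.val, fun {a b} hab =>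
    SimpleGraph.deleteEdges_adj.mpr
      ⟨B.adj_sub (hSB hab), fun hdel => hdel.2 ⟨s(a, b), hab, rfl⟩⟩⟩
  have hG' : (G.deleteEdges (B.edgeSet \ E)).Connected := hG.of_adj_reachable fun u v huv => by
    by_cases hdel : s(u, v) ∈ B.edgeSet \ E
    · have hadj : B.Adj u v := hdel.1
      exact (hS.connected ⟨u, B.edge_vert hadj⟩ ⟨v, B.edge_vert hadj.symm⟩).map φ
    · exact Adj.reachable (SimpleGraph.deleteEdges_adj.mpr ⟨huv, hdel⟩)
  have hcount := hG'.card_vert_le_card_edgeSet_add_one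
  have htree := (isTree_iff_connected_and_card.mp hS).2
  rw [Nat.card_coe_set_eq, edgeSet_deleteEdges,
    Set.ncard_sdiff (Set.sdiff_subset.trans B.edgeSet_subset)] at hcount
  rw [Nat.card_coe_set_eq, Nat.card_coe_set_eq] at htree
  have hdiff := Set.le_ncard_sdiff E B.edgeSet
  have hE : E.ncard ≤ S.edgeSet.ncard := Set.ncard_image_le
  have hBG : (B.edgeSet \ E).ncard ≤ G.edgeSet.ncard :=
    Set.ncard_le_ncard (Set.sdiff_subset.trans B.edgeSet_subset)
  omega

theorem IsTree.deg_le_two_of_leaves_eq_pair [Fintype V] {T : SimpleGraph V} (hT : T.IsTree)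
    {x y : V} (hxy : x ≠ y) (hleaves : {v | deg T v ≤ 1} = {x, y}) (v : V) : deg T v ≤ 2 := by
  classical
  have : Nontrivial V := ⟨⟨x, y, hxy⟩⟩
  simp only [deg_eq_degree] at hleaves ⊢
  have hpos : ∀ w, 0 < T.degree w := fun w => hT.connected.preconnected.degree_pos_of_nontrivial w
  have hinner : ∀ w ∈ ({x, y} : Finset V)ᶜ, 2 ≤ T.degree w := by
    intro w hw
    have : w ∉ ({x, y} : Set V) := by simpa using hw
    rw [← hleaves] at this
    simp only [Set.mem_ofPred_eq, not_le] at this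
    exact this
  by_contra! hv
  have hvS : v ∈ ({x, y} : Finset V)ᶜ := by
    have : v ∉ ({x, y} : Set V) := by rw [← hleaves, Set.mem_ofPred_eq]; omega
    simpa using this
  have hlt : ∑ _w ∈ ({x, y} : Finset V)ᶜ, 2 < ∑ w ∈ ({x, y} : Finset V)ᶜ, T.degree w :=
    Finset.sum_lt_sum hinner ⟨v, hvS, hv⟩
  have hsplit := Finset.sum_add_sum_compl {x, y} fun w => T.degree w
  have hcard := Finset.card_compl ({x, y} : Finset V)
  have hedges := hT.card_edgeFinset
  rw [Finset.sum_pair hxy, sum_degrees_eq_twice_card_edges] at hsplit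
  rw [Finset.card_pair hxy] at hcard
  rw [Finset.sum_const, hcard, smul_eq_mul] at hlt
  have := hpos x
  have := hpos y
  omega

theorem Walk.IsPath.isHamiltonian_of_deg_le [Finite V] [DecidableEq V] {G : SimpleGraph V}
    (hG : G.Connected) {x y : V} (hxy : x ≠ y) {p : G.Walk x y} (hp : p.IsPath)
    (hx : deg G x ≤ 1) (hy : deg G y ≤ 1) (hdeg : ∀ v, deg G v ≤ 2) : p.IsHamiltonian := by
  have hnil : ¬ p.Nil := Walk.not_nil_of_ne hxy
  have hsaturated : ∀ w ∈ p.support, G.neighborSet w ⊆ p.toSubgraph.neighborSet w := by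
    intro w hw
    refine (Set.eq_of_subset_of_ncard_le (p.toSubgraph.neighborSet_subset w) ?_).ge
    obtain ⟨i, rfl, hi⟩ := Walk.mem_support_iff_exists_getVert.mp hw
    rcases Nat.eq_zero_or_pos i with rfl | hi0
    · rw [p.getVert_zero, hp.neighborSet_toSubgraph_startpoint hnil, Set.ncard_singleton]
      exact hx
    rcases hi.lt_or_eq with hi | rfl
    · rw [hp.ncard_neighborSet_toSubgraph_internal_eq_two hi0.ne' hi]
      exact hdeg _
    · rw [p.getVert_length, hp.neighborSet_toSubgraph_endpoint hnil, Set.ncard_singleton]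
      exact hy
  have hclosed : ∀ {a b : V} (q : G.Walk a b), a ∈ p.support → b ∈ p.support := by
    intro a b q
    induction q with
    | nil => exact id
    | cons h _ ih =>
      exact fun ha => ih ((p.mem_verts_toSubgraph).mp (hsaturated _ ha h).snd_mem)
  exact hp.isHamiltonian_of_mem fun w => hclosed (hG.preconnected x w).some p.start_mem_support

section Search

variable {n : ℕ} (G : SimpleGraph (Fin n)) [DecidableRel G.Adj]

/- `pathsTo G v k` lists the vertex sequences of the paths of length `k` ending at `v`,
built backwards from `v`. -/
def pathsTo (v : Fin n) : ℕ → List (List (Fin n))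
  | 0 => [[v]]
  | k + 1 => (pathsTo v k).flatMap fun l =>
      ((List.finRange n).filter fun w => l.head?.any (G.Adj w ·) && w ∉ l).map (· :: l)

def reachList (u : Fin n) : ℕ → List (Fin n)
  | 0 => [u]
  | k + 1 => (List.finRange n).filter fun w => (reachList u k).any fun r => r = w ∨ G.Adj r w

variable {G}

theorem Walk.IsPath.support_mem_pathsTo {u v : Fin n} {p : G.Walk u v} (hp : p.IsPath) :
    p.support ∈ G.pathsTo v p.length := by
  induction p with
  | nil => simp [pathsTo]
  | cons hadj q ih =>
    rw [cons_isPath_iff] at hp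
    simp only [Walk.support_cons, Walk.length_cons, pathsTo, List.mem_flatMap, List.mem_map,
      List.mem_filter]
    refine ⟨q.support, ih hp.1, _, ⟨List.mem_finRange _, ?_⟩, rfl⟩
    have hhead := q.head_support ▸ List.head?_eq_some_head q.support_ne_nil
    simp [hhead, hadj, hp.2]

theorem reachable_of_mem_reachList {u w : Fin n} {k : ℕ} (h : w ∈ G.reachList u k) :
    G.Reachable u w := by
  induction k generalizing w with
  | zero =>
    rw [reachList, List.mem_singleton] at h
    exact h ▸ .rfl
  | succ k ih =>
    simp only [reachList, List.mem_filter, List.any_eq_true, decide_eq_true_eq] at h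
    obtain ⟨r, hr, rfl | hadj⟩ := h.2
    · exact ih hr
    · exact (ih hr).trans hadj.reachable

end Search

end SimpleGraph

theorem level_of_connected {V : Type*} [Finite V] {G : SimpleGraph V} (hG : G.Connected) :
    Level G (G.edgeSet.ncard + 1 - Nat.card V) := by
  rintro B ⟨hnontrivial, hconnected, -⟩
  have hcyc := hconnected.ncard_edgeSet_add_card_le hG
  have hB1 : 1 < B.verts.ncard := Set.one_lt_ncard_iff_nontrivial.mpr hnontrivial
  have hG1 := hG.card_vert_le_card_edgeSet_add_one
  rw [Nat.card_coe_set_eq] at hG1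
  omega

theorem Level.mono {V : Type*} {G : SimpleGraph V} {k k' : ℕ} (h : Level G k) (hk : k ≤ k') :
    Level G k' :=
  fun B hB => (h B hB).trans (by omega)

theorem ProperNet.of_forall_adj {V : Type*} {G : SimpleGraph V} {X : Set V}
    (h : ∀ u v, G.Adj u v → ∃ a ∈ X, (G.deleteEdges {s(u, v)}).Reachable u a) :
    ProperNet G X :=
  fun u v ⟨huv, _⟩ => ⟨h u v huv, by simpa only [Sym2.eq_swap] using h v u huv.symm⟩

theorem TreeBased.exists_isHamiltonian {V : Type*} [Fintype V] [DecidableEq V]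
    {G : SimpleGraph V} {x y : V} (hxy : x ≠ y) (h : TreeBased G {x, y}) :
    ∃ p : G.Walk x y, p.IsHamiltonian := by
  obtain ⟨T, hle, hT, hleaves⟩ := h
  have hleaf : ∀ v ∈ ({x, y} : Set V), deg T v ≤ 1 := fun v hv => by rwa [← hleaves] at hv
  let p := (hT.connected.preconnected x y).some.toPath
  have hham : (p : T.Walk x y).IsHamiltonian :=
    p.2.isHamiltonian_of_deg_le hT.connected hxy (hleaf x (by simp)) (hleaf y (by simp))
      (hT.deg_le_two_of_leaves_eq_pair hxy hleaves)
  exact ⟨(p : T.Walk x y).mapLe hle, hham.map _ Function.bijective_id⟩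

/- The network of Figure 3 of Francis–Huber–Moulton; vertices `0` and `1` are its leaves `x`
and `y`. -/
def fhmGraph : SimpleGraph (Fin 12) := SimpleGraph.fromRel fun a b => (a.val, b.val) ∈
  [(0, 2), (1, 3), (2, 6), (2, 7), (3, 8), (3, 10), (4, 7), (4, 10), (4, 11), (5, 6), (5, 9),
    (5, 10), (6, 11), (7, 9), (8, 9), (8, 11)]

instance : DecidableRel fhmGraph.Adj := fun a b => inferInstanceAs (Decidable (a ≠ b ∧ _))

theorem fhmGraph_connected : fhmGraph.Connected := by
  have h : ∀ v, v ∈ fhmGraph.reachList 0 11 := by decide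
  exact (connected_iff_exists_forall_reachable _).mpr
    ⟨0, fun v => reachable_of_mem_reachList (h v)⟩

theorem isNetwork_fhmGraph : IsNetwork fhmGraph {0, 1} := by
  have hdeg : ∀ v, fhmGraph.degree v ≤ 1 ∨ fhmGraph.degree v = 3 := by decide
  have hleaves : ∀ v, fhmGraph.degree v ≤ 1 ↔ v = 0 ∨ v = 1 := by decide
  refine ⟨fhmGraph_connected, fun v => deg_eq_degree fhmGraph v ▸ hdeg v, ?_⟩
  ext v
  simp only [Set.mem_ofPred_eq, deg_eq_degree, hleaves, Set.mem_insert_iff, Set.mem_singleton_iff]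

theorem level_fhmGraph : Level fhmGraph 5 := by
  have hedges : fhmGraph.edgeSet.ncard = 16 := by
    rw [Set.ncard_eq_toFinset_card']
    decide
  simpa [hedges] using level_of_connected fhmGraph_connected

theorem properNet_fhmGraph : ProperNet fhmGraph {0, 1} := by
  have h : ∀ u v, fhmGraph.Adj u v →
      ∃ a ∈ [0, 1], a ∈ (fhmGraph.deleteEdges {s(u, v)}).reachList u 11 := by decide
  refine ProperNet.of_forall_adj fun u v huv => ?_
  obtain ⟨a, ha, hreach⟩ := h u v huv
  exact ⟨a, by simpa using ha, reachable_of_mem_reachList hreach⟩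

theorem not_treeBased_fhmGraph : ¬ TreeBased fhmGraph {0, 1} := by
  have hsearch : fhmGraph.pathsTo 1 11 = [] := by decide
  intro h
  obtain ⟨p, hp⟩ := h.exists_isHamiltonian (by decide)
  have := hp.isPath.support_mem_pathsTo
  rw [hp.length_eq, Fintype.card_fin, hsearch] at this
  exact List.not_mem_nil this

/-- There is a level-5 network on two leaves (on 12 vertices) that is not
tree-based; consequently, for every `k ≥ 5` there is a proper level-`k`
network that is not tree-based. -/
theorem stmt6 :
    (∃ (G : SimpleGraph (Fin 12)) (x y : Fin 12), x ≠ y ∧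
      IsNetwork G {x, y} ∧ Level G 5 ∧ ¬ TreeBased G {x, y}) ∧
    ∀ k : ℕ, 5 ≤ k → ∃ (n : ℕ) (G : SimpleGraph (Fin n)) (X : Set (Fin n)),
      IsNetwork G X ∧ ProperNet G X ∧ Level G k ∧ ¬ TreeBased G X :=
  ⟨⟨fhmGraph, 0, 1, by decide, isNetwork_fhmGraph, level_fhmGraph, not_treeBased_fhmGraph⟩,
    fun _ hk => ⟨12, fhmGraph, {0, 1}, isNetwork_fhmGraph, properNet_fhmGraph,
      level_fhmGraph.mono hk, not_treeBased_fhmGraph⟩⟩
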